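/- arXiv:1709.05758 — 2 statements merged into one kernel-verified Lean document; each statement's English description precedes it below -/
import Mathlib

section
/- Let f : Ω → ℝ be a continuously differentiable function on an open set Ω ⊆ ℝⁿ containing a point x̄. The following three statements are equivalent: (a) f is piecewise quadratic on some neighborhood of x̄; (b) the gradient ∇f is piecewise affine on some neighborhood of x̄; (c) f is piecewise linear-quadratic on some neighborhood of x̄. -/
open Filter Topology Set

noncomputable section

/-- A polyhedron `{x : Ax ≤ b}`. -/
def IsPolyhedron {n : ℕ} (S : Set (Fin n → ℝ)) : Prop :=
  ∃ (m : ℕ) (A : Matrix (Fin m) (Fin n) ℝ) (b : Fin m → ℝ),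
    S = {x | ∀ i, (∑ j, A i j * x j) ≤ b i}

/-- The quadratic function `q(x) = ½ xᵀQx + cᵀx + α`. -/
def quadF {n : ℕ} (Q : Matrix (Fin n) (Fin n) ℝ) (c : Fin n → ℝ) (α : ℝ)
    (x : Fin n → ℝ) : ℝ :=
  (1/2) * (∑ i, ∑ j, Q i j * x i * x j) + (∑ i, c i * x i) + α

/-- `f` is piecewise quadratic on `U`: continuity and a finite family of quadratics among
whose values `f` selects. -/
def IsPQOn {n : ℕ} (f : (Fin n → ℝ) → ℝ) (U : Set (Fin n → ℝ)) : Prop :=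
  ContinuousOn f U ∧ ∃ (I : ℕ) (Qm : Fin I → Matrix (Fin n) (Fin n) ℝ)
    (c : Fin I → Fin n → ℝ) (α : Fin I → ℝ),
    ∀ x ∈ U, ∃ i, f x = quadF (Qm i) (c i) (α i) x

/-- `f` is piecewise linear-quadratic on `U`: `U` is a finite union of polyhedra on each of
which `f` agrees with a quadratic. -/
def IsPLQOn {n : ℕ} (f : (Fin n → ℝ) → ℝ) (U : Set (Fin n → ℝ)) : Prop :=
  ContinuousOn f U ∧ ∃ (I : ℕ) (P : Fin I → Set (Fin n → ℝ))
    (Qm : Fin I → Matrix (Fin n) (Fin n) ℝ) (c : Fin I → Fin n → ℝ) (α : Fin I → ℝ),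
    (∀ i, IsPolyhedron (P i)) ∧ U = ⋃ i, P i ∧
    ∀ i, ∀ x ∈ P i, f x = quadF (Qm i) (c i) (α i) x

/-- A vector function `G` is piecewise affine on `U`: `U` is a finite union of polyhedra on
each of which `G` agrees with an affine map. -/
def IsPAVecOn {n m : ℕ} (G : (Fin n → ℝ) → (Fin m → ℝ)) (U : Set (Fin n → ℝ)) : Prop :=
  ContinuousOn G U ∧ ∃ (I : ℕ) (P : Fin I → Set (Fin n → ℝ))
    (B : Fin I → Matrix (Fin m) (Fin n) ℝ) (d : Fin I → Fin m → ℝ),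
    (∀ i, IsPolyhedron (P i)) ∧ U = ⋃ i, P i ∧
    ∀ i, ∀ x ∈ P i, G x = fun k => (∑ j, B i k j * x j) + d i k

/-!
(c) ⇒ (a) is immediate. For (b) ⇒ (c), integrate `∇f` along segments from a fixed point of one
of the polyhedra on which `∇f` is affine: polyhedra are convex, so `f` is quadratic there.

For (a) ⇒ (b), Baire's theorem puts every point near `x̄` in the closure of the interior of a
set where `f` agrees with one of its quadratics `qᵢ`, so by continuity `∇f(x) ∈ {∇qᵢ(x)}` on a
polyhedral ball: `∇f` is a continuous selection of finitely many affine maps `Lᵢ`. Cutting the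
ball by the signs of all coordinate differences of the `Lᵢ` leaves finitely many polyhedral cells
on which no difference changes sign. In such a cell, the points at which a difference vanishes
only if it vanishes on the whole cell form a dense convex set, on which the closed sets
`{∇f = Lᵢ}` belonging to different maps `Lᵢ` are disjoint; connectedness leaves a single `Lᵢ`,
and continuity extends the identity `∇f = Lᵢ` to the whole cell.
-/

open Matrix AffineMap

section Polyhedron

variable {n : ℕ}

theorem isPolyhedron_of_finite {ρ : Type*} [Finite ρ] (a : ρ → Fin n → ℝ) (b : ρ → ℝ) :
    IsPolyhedron {x | ∀ r, a r ⬝ᵥ x ≤ b r} := by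
  obtain ⟨m, ⟨e⟩⟩ := Finite.exists_equiv_fin ρ
  refine ⟨m, fun i => a (e.symm i), fun i => b (e.symm i), ?_⟩
  ext x
  exact e.symm.forall_congr_right.symm

theorem IsPolyhedron.inter {S T : Set (Fin n → ℝ)} (hS : IsPolyhedron S) (hT : IsPolyhedron T) :
    IsPolyhedron (S ∩ T) := by
  obtain ⟨m₁, A₁, b₁, rfl⟩ := hS
  obtain ⟨m₂, A₂, b₂, rfl⟩ := hT
  convert isPolyhedron_of_finite (Sum.elim A₁ A₂) (Sum.elim b₁ b₂) using 1
  ext x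
  exact ⟨fun h r => r.casesOn h.1 h.2, fun h => ⟨fun i => h (.inl i), fun i => h (.inr i)⟩⟩

theorem isPolyhedron_iInter {ι : Type*} [Finite ι] {P : ι → Set (Fin n → ℝ)}
    (hP : ∀ i, IsPolyhedron (P i)) : IsPolyhedron (⋂ i, P i) := by
  choose m A b hP using hP
  convert isPolyhedron_of_finite (fun r : Σ i, Fin (m i) => A r.1 r.2)
    (fun r => b r.1 r.2) using 1
  ext x
  simp only [hP, mem_iInter, mem_ofPred_eq]
  exact ⟨fun h r => h r.1 r.2, fun h i j => h ⟨i, j⟩⟩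

theorem isPolyhedron_setOf_nonneg (φ : (Fin n → ℝ) →ᵃ[ℝ] ℝ) : IsPolyhedron {x | 0 ≤ φ x} := by
  convert isPolyhedron_of_finite
    (fun _ : Unit => fun j => -φ.linear fun k => if j = k then 1 else 0) (fun _ => φ 0) using 1
  ext x
  rw [AffineMap.decomp φ]
  simp [LinearMap.pi_apply_eq_sum_univ φ.linear x, dotProduct, mul_comm, neg_le_iff_add_nonneg,
    add_comm]

theorem IsPolyhedron.convex {S : Set (Fin n → ℝ)} (h : IsPolyhedron S) : Convex ℝ S := by
  obtain ⟨m, A, b, rfl⟩ := h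
  simp only [Set.ofPred_forall]
  exact convex_iInter fun i =>
    convex_halfSpace_le (f := (A i ⬝ᵥ ·)) ⟨dotProduct_add _, fun c x => dotProduct_smul c _ x⟩ _

theorem isPolyhedron_closedBall (c : Fin n → ℝ) {ε : ℝ} (hε : 0 ≤ ε) :
    IsPolyhedron (Metric.closedBall c ε) := by
  convert isPolyhedron_of_finite
    (Sum.elim (fun i => Pi.single i 1) (fun i => -Pi.single i 1) : Fin n ⊕ Fin n → Fin n → ℝ)
    (Sum.elim (fun i => c i + ε) (fun i => ε - c i)) using 1
  ext x
  simp [dist_pi_le_iff hε, Real.dist_eq, abs_le, Sum.forall, forall_and, and_comm, add_comm]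

end Polyhedron

section QuadF

variable {n : ℕ} (Q : Matrix (Fin n) (Fin n) ℝ) (c : Fin n → ℝ) (α : ℝ)

theorem quadF_eq_dotProduct (x : Fin n → ℝ) :
    quadF Q c α x = 1 / 2 * (x ⬝ᵥ Q *ᵥ x) + c ⬝ᵥ x + α := by
  simp only [quadF, dotProduct, mulVec, Finset.mul_sum]
  congr 3
  ext i; congr 1; ext j; ring

theorem contDiff_quadF : ContDiff ℝ 1 (quadF Q c α) := by
  unfold quadF
  fun_prop

theorem hasFDerivAt_quadF (x : Fin n → ℝ) :
    HasFDerivAt (quadF Q c α)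
      ((1 / 2 : ℝ) • ∑ i, ∑ j, ((Q i j * x i) • ContinuousLinearMap.proj (R := ℝ) j +
        x j • Q i j • ContinuousLinearMap.proj (R := ℝ) i) +
        ∑ i, c i • ContinuousLinearMap.proj (R := ℝ) (φ := fun _ : Fin n => ℝ) i) x := by
  have hproj (i : Fin n) := hasFDerivAt_apply (𝕜 := ℝ) i x
  exact (((HasFDerivAt.fun_sum fun i _ => HasFDerivAt.fun_sum fun j _ =>
    ((hproj i).const_mul (Q i j)).mul (hproj j)).const_mul _).add
    (HasFDerivAt.fun_sum fun i _ => (hproj i).const_mul (c i))).add_const α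

def gradQuadF : (Fin n → ℝ) →ᵃ[ℝ] (Fin n → ℝ) :=
  (Matrix.toLin' ((1 / 2 : ℝ) • (Q + Qᵀ))).toAffineMap + AffineMap.const ℝ _ c

theorem fderiv_quadF_single (x : Fin n → ℝ) (k : Fin n) :
    fderiv ℝ (quadF Q c α) x (Pi.single k 1) = gradQuadF Q c x k := by
  rw [(hasFDerivAt_quadF Q c α x).fderiv]
  simp [gradQuadF, Pi.single_apply, mulVec, dotProduct, Finset.sum_add_distrib, mul_comm,
    add_comm]

theorem exists_quadF_eq_expansion (B : Matrix (Fin n) (Fin n) ℝ) (d x₀ : Fin n → ℝ)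
    (v : ℝ) : ∃ c α, ∀ x, v + (x - x₀) ⬝ᵥ (B *ᵥ x₀ + d) + (x - x₀) ⬝ᵥ B *ᵥ (x - x₀) / 2 =
      quadF B c α x := by
  refine ⟨d + (1 / 2 : ℝ) • (B *ᵥ x₀ - Bᵀ *ᵥ x₀),
    v - x₀ ⬝ᵥ (B *ᵥ x₀ + d) + x₀ ⬝ᵥ B *ᵥ x₀ / 2, fun x => ?_⟩
  rw [quadF_eq_dotProduct, mulVec_transpose]
  simp only [mulVec_sub, sub_dotProduct, dotProduct_sub, add_dotProduct, dotProduct_add,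
    smul_dotProduct, smul_eq_mul, ← dotProduct_mulVec]
  rw [dotProduct_comm d x, dotProduct_comm (B *ᵥ x₀) x]
  ring

end QuadF

def SignDefiniteOn {E : Type*} (φ : E → ℝ) (R : Set E) : Prop :=
  (∀ x ∈ R, 0 ≤ φ x) ∨ (∀ x ∈ R, φ x ≤ 0)

section GenericPoints

variable {E ι : Type*} [AddCommGroup E] [Module ℝ E] {R : Set E} {φ : ι → E →ᵃ[ℝ] ℝ}

theorem SignDefiniteOn.eq_zero_of_lineMap_eq_zero {ψ : E →ᵃ[ℝ] ℝ} (hψ : SignDefiniteOn ψ R)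
    {x y : E} (hx : x ∈ R) (hy : y ∈ R) {t : ℝ} (ht : t ∈ Ioc 0 1)
    (h : ψ (lineMap x y t) = 0) : ψ y = 0 := by
  rw [apply_lineMap, lineMap_apply_ring] at h
  obtain ⟨ht₀, ht₁⟩ := ht
  rcases hψ with hψ | hψ
  · nlinarith [hψ x hx, hψ y hy, mul_nonneg (sub_nonneg.2 ht₁) (hψ x hx)]
  · nlinarith [hψ x hx, hψ y hy, mul_nonneg (sub_nonneg.2 ht₁) (neg_nonneg.2 (hψ x hx))]

def genericPointsOn (φ : ι → E →ᵃ[ℝ] ℝ) (R : Set E) : Set E :=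
  {x ∈ R | ∀ p, φ p x = 0 → ∀ y ∈ R, φ p y = 0}

theorem lineMap_mem_genericPointsOn (hR : Convex ℝ R) (hφ : ∀ p, SignDefiniteOn (φ p) R)
    {x w : E} (hx : x ∈ R) (hw : w ∈ genericPointsOn φ R) {t : ℝ} (ht : t ∈ Ioc 0 1) :
    lineMap x w t ∈ genericPointsOn φ R :=
  ⟨hR.lineMap_mem hx hw.1 ⟨ht.1.le, ht.2⟩, fun p hp =>
    hw.2 p ((hφ p).eq_zero_of_lineMap_eq_zero hx hw.1 ht hp)⟩

theorem convex_genericPointsOn (hR : Convex ℝ R) (hφ : ∀ p, SignDefiniteOn (φ p) R) :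
    Convex ℝ (genericPointsOn φ R) := by
  intro x hx y hy a b ha hb hab
  obtain rfl | hb₀ := hb.eq_or_lt
  · simpa [show a = 1 by linarith] using hx
  have := lineMap_mem_genericPointsOn hR hφ hx.1 hy ⟨hb₀, by linarith⟩
  rwa [lineMap_apply_module, show 1 - b = a by linarith] at this

theorem subset_closure_genericPointsOn [TopologicalSpace E] [ContinuousAdd E]
    [ContinuousSMul ℝ E] (hR : Convex ℝ R) (hφ : ∀ p, SignDefiniteOn (φ p) R)
    (hne : (genericPointsOn φ R).Nonempty) : R ⊆ closure (genericPointsOn φ R) := by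
  obtain ⟨w, hw⟩ := hne
  intro x hx
  refine closure_mono ?_ (segment_subset_closure_openSegment (left_mem_segment ℝ x w))
  rw [openSegment_eq_image_lineMap]
  rintro _ ⟨t, ht, rfl⟩
  exact lineMap_mem_genericPointsOn hR hφ hx hw ⟨ht.1, ht.2.le⟩

theorem genericPointsOn_nonempty [Finite ι] (hR : Convex ℝ R) (hφ : ∀ p, SignDefiniteOn (φ p) R)
    (hne : R.Nonempty) : (genericPointsOn φ R).Nonempty := by
  classical
  have := Fintype.ofFinite ι
  suffices ∀ s : Finset ι, ∃ w ∈ R, ∀ p ∈ s, φ p w = 0 → ∀ y ∈ R, φ p y = 0 by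
    obtain ⟨w, hw, h⟩ := this Finset.univ
    exact ⟨w, hw, fun p => h p (Finset.mem_univ p)⟩
  intro s
  induction s using Finset.induction_on with
  | empty => exact hne.imp fun w hw => ⟨hw, by simp⟩
  | insert p s _ ih =>
    obtain ⟨w, hw, hws⟩ := ih
    by_cases hp : ∀ y ∈ R, φ p y = 0
    · exact ⟨w, hw, Finset.forall_mem_insert _ _ _ |>.2 ⟨fun _ => hp, hws⟩⟩
    obtain ⟨y, hy, hpy⟩ : ∃ y ∈ R, φ p y ≠ 0 := by simpa using hp
    -- By sign-definiteness, the midpoint of `w` and `y` is a zero of no functional that is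
    -- nonzero at `w` or at `y`.
    have half : (2⁻¹ : ℝ) ∈ Ioc 0 1 := by norm_num
    refine ⟨lineMap w y 2⁻¹, hR.lineMap_mem hw hy ⟨by norm_num, by norm_num⟩,
      Finset.forall_mem_insert _ _ _ |>.2 ⟨fun h => ?_, fun q hq h => ?_⟩⟩
    · exact absurd ((hφ p).eq_zero_of_lineMap_eq_zero hw hy half h) hpy
    · rw [← lineMap_apply_one_sub, show (1 : ℝ) - 2⁻¹ = 2⁻¹ by norm_num] at h
      exact hws q hq ((hφ q).eq_zero_of_lineMap_eq_zero hy hw half h)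

end GenericPoints

theorem IsPreconnected.exists_eqOn_of_forall_exists_eq {X Y ι : Type*} [TopologicalSpace X]
    [TopologicalSpace Y] [T2Space Y] [Finite ι] {W : Set X} (hW : IsPreconnected W)
    (hne : W.Nonempty) {G : X → Y} {L : ι → X → Y} (hG : ContinuousOn G W)
    (hL : ∀ i, ContinuousOn (L i) W) (hsel : ∀ x ∈ W, ∃ i, G x = L i x)
    (hsep : ∀ i j, ∀ x ∈ W, L i x = L j x → EqOn (L i) (L j) W) :
    ∃ i, EqOn G (L i) W := by
  have := isPreconnected_iff_preconnectedSpace.1 hW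
  obtain ⟨x₀, hx₀⟩ := hne
  obtain ⟨i₀, hi₀⟩ := hsel x₀ hx₀
  have hclosed (i : ι) : IsClosed {x : W | G x = L i x} :=
    isClosed_eq hG.domRestrict (hL i).domRestrict
  have hcompl : {x : W | G x = L i₀ x}ᶜ =
      ⋃ j : {j // ¬EqOn (L j) (L i₀) W}, {x : W | G x = L j x} := by
    ext ⟨x, hx⟩
    simp only [mem_compl_iff, mem_ofPred_eq, mem_iUnion, Subtype.exists, exists_prop]
    constructor
    · intro hGi
      obtain ⟨j, hj⟩ := hsel x hx
      exact ⟨j, fun h => hGi (hj.trans (h hx)), hj⟩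
    · rintro ⟨j, hj, hGj⟩ hGi
      exact hj (hsep j i₀ x hx (hGj.symm.trans hGi))
  have hclopen : IsClopen {x : W | G x = L i₀ x} := by
    refine ⟨hclosed i₀, ?_⟩
    rw [← isClosed_compl_iff, hcompl]
    exact isClosed_iUnion_of_finite fun j => hclosed j
  have huniv := eq_univ_iff_forall.1 (hclopen.eq_univ ⟨⟨x₀, hx₀⟩, hi₀⟩)
  exact ⟨i₀, fun x hx => huniv ⟨x, hx⟩⟩

def pairwiseCoordDiff {E ι κ : Type*} [AddCommGroup E] [Module ℝ E]
    (L : ι → E →ᵃ[ℝ] (κ → ℝ)) (p : ι × ι × κ) : E →ᵃ[ℝ] ℝ :=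
  (LinearMap.proj p.2.2).toAffineMap.comp (L p.1 - L p.2.1)

theorem Convex.exists_eqOn_of_forall_exists_eq {E ι κ : Type*} [AddCommGroup E] [Module ℝ E]
    [TopologicalSpace E] [ContinuousAdd E] [ContinuousSMul ℝ E] [Finite ι] [Finite κ]
    {R : Set E} (hR : Convex ℝ R) (hne : R.Nonempty) {G : E → κ → ℝ} (hG : ContinuousOn G R)
    {L : ι → E →ᵃ[ℝ] (κ → ℝ)} (hL : ∀ i, Continuous (L i)) (hsel : ∀ x ∈ R, ∃ i, G x = L i x)
    (hsign : ∀ p, SignDefiniteOn (pairwiseCoordDiff L p) R) :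
    ∃ i, EqOn G (L i) R := by
  set W := genericPointsOn (pairwiseCoordDiff L) R
  have hWR : W ⊆ R := fun x hx => hx.1
  have hWne : W.Nonempty := genericPointsOn_nonempty hR hsign hne
  have hsep (i j : ι) (x) (hx : x ∈ W) (h : L i x = L j x) : EqOn (L i) (L j) W :=
    fun y hy => funext fun k => sub_eq_zero.1 (hx.2 (i, j, k) (sub_eq_zero.2 (congrFun h k)) y hy.1)
  obtain ⟨i, hi⟩ := (convex_genericPointsOn hR hsign).isPreconnected.exists_eqOn_of_forall_exists_eq
    hWne (hG.mono hWR) (fun i => (hL i).continuousOn) (fun x hx => hsel x hx.1) hsep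
  exact ⟨i, hi.of_subset_closure hG (hL i).continuousOn hWR
    (subset_closure_genericPointsOn hR hsign hWne)⟩

section Cells

variable {E ι : Type*} [AddCommGroup E] [Module ℝ E]

def signCell (K : Set E) (φ : ι → E →ᵃ[ℝ] ℝ) (σ : ι → Bool) : Set E :=
  K ∩ ⋂ p, {x | 0 ≤ (if σ p then φ p else -φ p) x}

theorem iUnion_signCell (K : Set E) (φ : ι → E →ᵃ[ℝ] ℝ) : ⋃ σ, signCell K φ σ = K := by
  refine subset_antisymm (iUnion_subset fun σ => inter_subset_left) fun x hx => ?_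
  refine mem_iUnion.2 ⟨fun p => decide (0 ≤ φ p x), hx, mem_iInter.2 fun p => ?_⟩
  by_cases h : 0 ≤ φ p x <;> simp [h, le_of_not_ge]

theorem signDefiniteOn_signCell (K : Set E) (φ : ι → E →ᵃ[ℝ] ℝ) (σ : ι → Bool) (p : ι) :
    SignDefiniteOn (φ p) (signCell K φ σ) := by
  cases h : σ p
  · exact .inr fun x hx => by simpa [h] using mem_iInter.1 hx.2 p
  · exact .inl fun x hx => by simpa [h] using mem_iInter.1 hx.2 p

theorem isPolyhedron_signCell {n : ℕ} [Finite ι] {K : Set (Fin n → ℝ)} (hK : IsPolyhedron K)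
    (φ : ι → (Fin n → ℝ) →ᵃ[ℝ] ℝ) (σ : ι → Bool) : IsPolyhedron (signCell K φ σ) :=
  hK.inter (isPolyhedron_iInter fun _ => isPolyhedron_setOf_nonneg _)

end Cells

theorem isPAVecOn_iUnion {n m : ℕ} {κ : Type*} [Finite κ] {P : κ → Set (Fin n → ℝ)}
    (hP : ∀ s, IsPolyhedron (P s)) {G : (Fin n → ℝ) → Fin m → ℝ} (hG : ContinuousOn G (⋃ s, P s))
    (A : κ → (Fin n → ℝ) →ᵃ[ℝ] (Fin m → ℝ)) (hA : ∀ s, EqOn G (A s) (P s)) :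
    IsPAVecOn G (⋃ s, P s) := by
  obtain ⟨N, ⟨e⟩⟩ := Finite.exists_equiv_fin κ
  refine ⟨hG, N, fun a => P (e.symm a), fun a => LinearMap.toMatrix' (A (e.symm a)).linear,
    fun a => A (e.symm a) 0, fun a => hP _, (e.symm.iSup_comp (g := P)).symm, fun a x hx => ?_⟩
  rw [hA _ hx]
  change _ = LinearMap.toMatrix' _ *ᵥ x + _
  rw [LinearMap.toMatrix'_mulVec, AffineMap.decomp]
  rfl

theorem IsPolyhedron.isPAVecOn_of_forall_exists_eq {n m : ℕ} {ι : Type*} [Finite ι]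
    {K : Set (Fin n → ℝ)} (hK : IsPolyhedron K) {G : (Fin n → ℝ) → Fin m → ℝ}
    (hG : ContinuousOn G K) (L : ι → (Fin n → ℝ) →ᵃ[ℝ] (Fin m → ℝ))
    (hsel : ∀ x ∈ K, ∃ i, G x = L i x) : IsPAVecOn G K := by
  have hcell (σ) : ∃ A : (Fin n → ℝ) →ᵃ[ℝ] (Fin m → ℝ),
      EqOn G A (signCell K (pairwiseCoordDiff L) σ) := by
    have hsub : signCell K (pairwiseCoordDiff L) σ ⊆ K := inter_subset_left
    rcases (signCell K (pairwiseCoordDiff L) σ).eq_empty_or_nonempty with h | h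
    · exact ⟨0, h ▸ eqOn_empty _ _⟩
    obtain ⟨i, hi⟩ := (isPolyhedron_signCell hK _ σ).convex.exists_eqOn_of_forall_exists_eq h
      (hG.mono hsub) (fun i => (L i).continuous_of_finiteDimensional)
      (fun x hx => hsel x (hsub hx)) (signDefiniteOn_signCell K _ σ)
    exact ⟨L i, hi⟩
  choose A hA using hcell
  rw [← iUnion_signCell K (pairwiseCoordDiff L)] at hG ⊢
  exact isPAVecOn_iUnion (fun σ => isPolyhedron_signCell hK _ σ) hG A hA

theorem exists_mem_closure_interior_of_subset_iUnion {X ι : Type*} [TopologicalSpace X]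
    [BaireSpace X] [Finite ι] {S : ι → Set X} (hS : ∀ i, IsClosed (S i)) {O : Set X}
    (hO : IsOpen O) (hOS : O ⊆ ⋃ i, S i) {x : X} (hx : x ∈ O) :
    ∃ i, x ∈ closure (interior (S i)) := by
  -- Adjoining `Oᶜ` gives a closed cover of the whole space, to which Baire's theorem applies.
  let C (o : Option ι) : Set X := o.elim Oᶜ S
  have hC : ∀ o, IsClosed (C o) := by
    rintro (_ | i)
    exacts [hO.isClosed_compl, hS i]
  have hcover : ⋃ o, C o = univ := by
    refine eq_univ_of_forall fun y => ?_
    by_cases hy : y ∈ O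
    · obtain ⟨i, hi⟩ := mem_iUnion.1 (hOS hy)
      exact mem_iUnion.2 ⟨some i, hi⟩
    · exact mem_iUnion.2 ⟨none, hy⟩
  have hsub : O ∩ ⋃ o, interior (C o) ⊆ ⋃ i, interior (S i) := by
    rintro y ⟨hyO, hy⟩
    obtain ⟨_ | i, hi⟩ := mem_iUnion.1 hy
    exacts [absurd hyO (interior_subset hi), mem_iUnion.2 ⟨i, hi⟩]
  rw [← mem_iUnion, ← closure_iUnion_of_finite]
  exact closure_mono hsub (hO.inter_closure ⟨hx, dense_iUnion_interior_of_closed hC hcover x⟩)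

theorem Set.EqOn.fderiv_eqOn_closure_interior {𝕜 E F : Type*} [NontriviallyNormedField 𝕜]
    [NormedAddCommGroup E] [NormedSpace 𝕜 E] [NormedAddCommGroup F] [NormedSpace 𝕜 F]
    {f g : E → F} {S Ω : Set E} (hfg : EqOn f g S) (hf : ContinuousOn (fderiv 𝕜 f) Ω)
    (hg : Continuous (fderiv 𝕜 g)) (hSΩ : closure (interior S) ⊆ Ω) :
    EqOn (fderiv 𝕜 f) (fderiv 𝕜 g) (closure (interior S)) := by
  have hint : EqOn (fderiv 𝕜 f) (fderiv 𝕜 g) (interior S) := fun y hy =>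
    Filter.EventuallyEq.fderiv_eq (Filter.mem_of_superset (mem_interior_iff_mem_nhds.1 hy) hfg)
  exact hint.of_subset_closure (hf.mono hSΩ) hg.continuousOn subset_closure Subset.rfl

theorem IsPQOn.exists_isPAVecOn_fderiv {n : ℕ} {Ω U : Set (Fin n → ℝ)} (hΩ : IsOpen Ω)
    {f : (Fin n → ℝ) → ℝ} (hf : ContDiffOn ℝ 1 f Ω) {xbar : Fin n → ℝ} (hU : U ∈ 𝓝 xbar)
    (hUΩ : U ⊆ Ω) (hpq : IsPQOn f U) :
    ∃ V ∈ 𝓝 xbar, V ⊆ Ω ∧ IsPAVecOn (fun x k => fderiv ℝ f x (Pi.single k 1)) V := by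
  obtain ⟨-, I, Q, c, α, hsel⟩ := hpq
  obtain ⟨ε, hε, hball⟩ := Metric.mem_nhds_iff.1 hU
  have hBΩ : Metric.closedBall xbar (ε / 2) ⊆ Ω :=
    ((Metric.closedBall_subset_ball (half_lt_self hε)).trans hball).trans hUΩ
  let S (i : Fin I) := {x ∈ Metric.closedBall xbar (ε / 2) | f x = quadF (Q i) (c i) (α i) x}
  have hS (i : Fin I) : IsClosed (S i) := Metric.isClosed_closedBall.isClosed_eq
    (hf.continuousOn.mono hBΩ) (contDiff_quadF _ _ _).continuous.continuousOn
  have hcover : Metric.ball xbar (ε / 2) ⊆ ⋃ i, S i := fun x hx =>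
    have ⟨i, hi⟩ := hsel x (hball (Metric.ball_subset_ball (half_le_self hε.le) hx))
    mem_iUnion.2 ⟨i, Metric.ball_subset_closedBall hx, hi⟩
  have hfd := hf.continuousOn_fderiv_of_isOpen hΩ le_rfl
  have hgrad (x) (hx : x ∈ Metric.closedBall xbar (ε / 4)) :
      ∃ i, (fun k => fderiv ℝ f x (Pi.single k 1)) = gradQuadF (Q i) (c i) x := by
    obtain ⟨i, hi⟩ := exists_mem_closure_interior_of_subset_iUnion hS Metric.isOpen_ball hcover
      (Metric.closedBall_subset_ball (by linarith) hx)
    have hsub : closure (interior (S i)) ⊆ Ω :=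
      (hS i).closure_interior_subset.trans (sep_subset _ _ |>.trans hBΩ)
    refine ⟨i, funext fun k => ?_⟩
    rw [EqOn.fderiv_eqOn_closure_interior (fun y hy => hy.2) hfd
      ((contDiff_quadF _ _ (α i)).continuous_fderiv one_ne_zero) hsub hi, fderiv_quadF_single]
  have hV : Metric.closedBall xbar (ε / 4) ⊆ Ω :=
    (Metric.closedBall_subset_closedBall (by linarith)).trans hBΩ
  refine ⟨_, Metric.closedBall_mem_nhds _ (by positivity), hV, ?_⟩
  exact (isPolyhedron_closedBall _ (by positivity)).isPAVecOn_of_forall_exists_eq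
    (continuousOn_pi.2 fun k => (hfd.mono hV).clm_apply continuousOn_const) _ hgrad

theorem ContinuousLinearMap.apply_eq_dotProduct {n : ℕ} (L : (Fin n → ℝ) →L[ℝ] ℝ)
    (v : Fin n → ℝ) : L v = v ⬝ᵥ fun k => L (Pi.single k 1) := by
  conv_lhs => rw [← Finset.univ_sum_single v]
  simp only [map_sum, dotProduct]
  refine Finset.sum_congr rfl fun k _ => ?_
  rw [← smul_eq_mul, ← map_smul]
  congr 1
  ext j
  simp [Pi.single_apply]

theorem eq_add_add_half_of_hasDerivAt {φ : ℝ → ℝ} {a b : ℝ}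
    (h : ∀ t ∈ Icc (0 : ℝ) 1, HasDerivAt φ (a + t * b) t) : φ 1 = φ 0 + a + b / 2 := by
  have := intervalIntegral.integral_eq_sub_of_hasDerivAt (by rwa [uIcc_of_le zero_le_one])
    ((by fun_prop : Continuous fun t : ℝ => a + t * b).intervalIntegrable 0 1)
  norm_num [intervalIntegral.integral_add, integral_id] at this
  linarith

theorem Convex.exists_eqOn_quadF_of_fderiv_eq {n : ℕ} {P : Set (Fin n → ℝ)} (hP : Convex ℝ P)
    {f : (Fin n → ℝ) → ℝ} (hf : ∀ x ∈ P, DifferentiableAt ℝ f x)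
    (B : Matrix (Fin n) (Fin n) ℝ) (d : Fin n → ℝ)
    (hgrad : ∀ x ∈ P, (fun k => fderiv ℝ f x (Pi.single k 1)) = B *ᵥ x + d) :
    ∃ Q c α, EqOn f (quadF Q c α) P := by
  rcases P.eq_empty_or_nonempty with rfl | ⟨x₀, hx₀⟩
  · exact ⟨0, 0, 0, eqOn_empty _ _⟩
  obtain ⟨c, α, hcα⟩ := exists_quadF_eq_expansion B d x₀ (f x₀)
  refine ⟨B, c, α, fun x hx => ?_⟩
  have hline (t) (ht : t ∈ Icc (0 : ℝ) 1) : HasDerivAt (fun t => f (lineMap x₀ x t))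
      ((x - x₀) ⬝ᵥ (B *ᵥ x₀ + d) + t * ((x - x₀) ⬝ᵥ B *ᵥ (x - x₀))) t := by
    have hmem := hP.lineMap_mem hx₀ hx ht
    refine ((hf _ hmem).hasFDerivAt.comp_hasDerivAt t hasDerivAt_lineMap).congr_deriv ?_
    rw [ContinuousLinearMap.apply_eq_dotProduct, hgrad _ hmem, lineMap_apply_module']
    simp only [mulVec_add, mulVec_smul, dotProduct_add, dotProduct_smul, smul_eq_mul]
    ring
  simpa [← hcα] using eq_add_add_half_of_hasDerivAt hline

theorem IsPAVecOn.isPLQOn {n : ℕ} {Ω U : Set (Fin n → ℝ)} (hΩ : IsOpen Ω)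
    {f : (Fin n → ℝ) → ℝ} (hf : ContDiffOn ℝ 1 f Ω) (hUΩ : U ⊆ Ω)
    (h : IsPAVecOn (fun x k => fderiv ℝ f x (Pi.single k 1)) U) : IsPLQOn f U := by
  obtain ⟨-, I, P, B, d, hP, rfl, hPB⟩ := h
  have hdiff (i : Fin I) (x) (hx : x ∈ P i) : DifferentiableAt ℝ f x :=
    (hf.differentiableOn one_ne_zero).differentiableAt (hΩ.mem_nhds (hUΩ (mem_iUnion_of_mem i hx)))
  choose Q c α hq using fun i =>
    (hP i).convex.exists_eqOn_quadF_of_fderiv_eq (hdiff i) (B i) (d i) (hPB i)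
  exact ⟨hf.continuousOn.mono hUΩ, I, P, Q, c, α, hP, rfl, hq⟩

theorem IsPLQOn.isPQOn {n : ℕ} {f : (Fin n → ℝ) → ℝ} {U : Set (Fin n → ℝ)} (h : IsPLQOn f U) :
    IsPQOn f U := by
  obtain ⟨hcont, I, P, Q, c, α, -, rfl, hq⟩ := h
  refine ⟨hcont, I, Q, c, α, fun x hx => ?_⟩
  obtain ⟨i, hi⟩ := mem_iUnion.1 hx
  exact ⟨i, hq i x hi⟩

theorem stmt9_general {n : ℕ} (Ω : Set (Fin n → ℝ)) (hΩ : IsOpen Ω)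
    (f : (Fin n → ℝ) → ℝ) (hf : ContDiffOn ℝ 1 f Ω)
    (xbar : Fin n → ℝ) :
    ((∃ U ∈ 𝓝 xbar, U ⊆ Ω ∧ IsPQOn f U) ↔
     (∃ U ∈ 𝓝 xbar, U ⊆ Ω ∧
        IsPAVecOn (fun x k => fderiv ℝ f x (Pi.single k 1)) U)) ∧
    ((∃ U ∈ 𝓝 xbar, U ⊆ Ω ∧
        IsPAVecOn (fun x k => fderiv ℝ f x (Pi.single k 1)) U) ↔
     (∃ U ∈ 𝓝 xbar, U ⊆ Ω ∧ IsPLQOn f U)) :=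
  ⟨⟨fun ⟨_, hU, hUΩ, h⟩ => h.exists_isPAVecOn_fderiv hΩ hf hU hUΩ,
      fun ⟨U, hU, hUΩ, h⟩ => ⟨U, hU, hUΩ, (h.isPLQOn hΩ hf hUΩ).isPQOn⟩⟩,
    ⟨fun ⟨U, hU, hUΩ, h⟩ => ⟨U, hU, hUΩ, h.isPLQOn hΩ hf hUΩ⟩,
      fun ⟨_, hU, hUΩ, h⟩ => h.isPQOn.exists_isPAVecOn_fderiv hΩ hf hU hUΩ⟩⟩

/-- For a `C¹` function `f` on an open set `Ω ∋ xbar`, the following are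
equivalent: (a) `f` is piecewise quadratic near `xbar`; (b) `∇f` is piecewise affine near
`xbar`; (c) `f` is piecewise linear-quadratic near `xbar`. -/
theorem stmt9 {n : ℕ} (Ω : Set (Fin n → ℝ)) (hΩ : IsOpen Ω)
    (f : (Fin n → ℝ) → ℝ) (hf : ContDiffOn ℝ 1 f Ω)
    (xbar : Fin n → ℝ) (hxbar : xbar ∈ Ω) :
    ((∃ U ∈ 𝓝 xbar, U ⊆ Ω ∧ IsPQOn f U) ↔
     (∃ U ∈ 𝓝 xbar, U ⊆ Ω ∧
        IsPAVecOn (fun x k => fderiv ℝ f x (Pi.single k 1)) U)) ∧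
    ((∃ U ∈ 𝓝 xbar, U ⊆ Ω ∧
        IsPAVecOn (fun x k => fderiv ℝ f x (Pi.single k 1)) U) ↔
     (∃ U ∈ 𝓝 xbar, U ⊆ Ω ∧ IsPLQOn f U)) :=
  stmt9_general Ω hΩ f hf xbar
end
end

section
/- Consider the quadratic program: minimize ½xᵀQx + cᵀx over {x ∈ ℝⁿ : Ax ≤ b}, where Q ∈ ℝⁿˣⁿ is symmetric, c ∈ ℝⁿ, A ∈ ℝᵐˣⁿ, b ∈ ℝᵐ. The set of its isolated local minimizers (equivalently, strict local minimizers, equivalently strong local minimizers) is finite. -/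
open Filter Topology Set

noncomputable section

/-- Euclidean norm on `Fin n → ℝ`. -/
def n2 {n : ℕ} (v : Fin n → ℝ) : ℝ := Real.sqrt (∑ i, v i ^ 2)

/-- Local minimizer of `f` on `X`. -/
def IsLocMin' {n : ℕ} (f : (Fin n → ℝ) → ℝ) (X : Set (Fin n → ℝ)) (xbar : Fin n → ℝ) : Prop :=
  xbar ∈ X ∧ ∃ ε > (0:ℝ), ∀ y ∈ X, n2 (y - xbar) < ε → f xbar ≤ f y

/-- Strict local minimizer of `f` on `X`. -/
def IsStrictLocMin {n : ℕ} (f : (Fin n → ℝ) → ℝ) (X : Set (Fin n → ℝ)) (xbar : Fin n → ℝ) : Prop :=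
  xbar ∈ X ∧ ∃ ε > (0:ℝ), ∀ y ∈ X, n2 (y - xbar) < ε → y ≠ xbar → f xbar < f y

/-- Strong local minimizer of `f` on `X`. -/
def IsStrongLocMin {n : ℕ} (f : (Fin n → ℝ) → ℝ) (X : Set (Fin n → ℝ)) (xbar : Fin n → ℝ) : Prop :=
  xbar ∈ X ∧ ∃ c > (0:ℝ), ∃ ε > (0:ℝ), ∀ y ∈ X, n2 (y - xbar) < ε →
    f xbar + c * n2 (y - xbar) ^ 2 ≤ f y

/-- Isolated local minimizer of `f` on `X`. -/
def IsIsolatedLocMin {n : ℕ} (f : (Fin n → ℝ) → ℝ) (X : Set (Fin n → ℝ)) (xbar : Fin n → ℝ) : Prop :=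
  IsLocMin' f X xbar ∧ ∃ ε > (0:ℝ), ∀ y, IsLocMin' f X y → n2 (y - xbar) < ε → y = xbar

lemma n2_eq_norm {n : ℕ} (v : Fin n → ℝ) :
    n2 v = ‖(WithLp.equiv 2 (Fin n → ℝ)).symm v‖ := by
  rw [EuclideanSpace.norm_eq]
  simp [n2, Real.norm_eq_abs, sq_abs]

lemma n2_triangle {n : ℕ} (u v : Fin n → ℝ) : n2 (u + v) ≤ n2 u + n2 v := by
  simp only [n2_eq_norm]
  rw [show (WithLp.equiv 2 (Fin n → ℝ)).symm (u + v)
    = (WithLp.equiv 2 (Fin n → ℝ)).symm u + (WithLp.equiv 2 (Fin n → ℝ)).symm v from rfl]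
  exact norm_add_le _ _

lemma n2_smul {n : ℕ} (t : ℝ) (v : Fin n → ℝ) : n2 (t • v) = |t| * n2 v := by
  simp only [n2_eq_norm]
  rw [show (WithLp.equiv 2 (Fin n → ℝ)).symm (t • v)
    = t • (WithLp.equiv 2 (Fin n → ℝ)).symm v from rfl]
  rw [norm_smul, Real.norm_eq_abs]

lemma n2_pos {n : ℕ} {v : Fin n → ℝ} (hv : v ≠ 0) : 0 < n2 v := by
  rw [n2_eq_norm, norm_pos_iff]
  simpa using hv

lemma key_quad {α β : ℝ} (h : ∀ᶠ t in 𝓝[≠] (0:ℝ), 0 < β * t + α * t ^ 2) : β = 0 := by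
  have hR : ∀ᶠ t in 𝓝[>] (0:ℝ), 0 < β + α * t := by
    have h1 : ∀ᶠ t in 𝓝[>] (0:ℝ), 0 < β * t + α * t ^ 2 :=
      h.filter_mono (nhdsWithin_mono 0 (fun t ht => ne_of_gt ht))
    filter_upwards [h1, self_mem_nhdsWithin] with t ht ht0
    have ht0' : (0:ℝ) < t := ht0
    nlinarith
  have hL : ∀ᶠ t in 𝓝[<] (0:ℝ), β + α * t < 0 := by
    have h1 : ∀ᶠ t in 𝓝[<] (0:ℝ), 0 < β * t + α * t ^ 2 :=
      h.filter_mono (nhdsWithin_mono 0 (fun t ht => ne_of_lt ht))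
    filter_upwards [h1, self_mem_nhdsWithin] with t ht ht0
    have ht0' : t < 0 := ht0
    nlinarith
  have hcont : Tendsto (fun t : ℝ => β + α * t) (𝓝 0) (𝓝 β) := by
    have : Continuous (fun t : ℝ => β + α * t) := by continuity
    simpa using this.tendsto 0
  have h1 : 0 ≤ β :=
    ge_of_tendsto (hcont.mono_left nhdsWithin_le_nhds)
      (hR.mono fun t ht => le_of_lt ht)
  have h2 : β ≤ 0 :=
    le_of_tendsto (hcont.mono_left nhdsWithin_le_nhds)
      (hL.mono fun t ht => le_of_lt ht)
  linarith

lemma row_expand {n : ℕ} (a x d : Fin n → ℝ) (t : ℝ) :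
    ∑ j, a j * (x j + t * d j) = (∑ j, a j * x j) + t * ∑ j, a j * d j := by
  rw [Finset.mul_sum, ← Finset.sum_add_distrib]
  exact Finset.sum_congr rfl fun j _ => by ring

lemma qexpand {n : ℕ} (Q : Matrix (Fin n) (Fin n) ℝ) (hQ : ∀ i j, Q i j = Q j i)
    (c : Fin n → ℝ) (q : (Fin n → ℝ) → ℝ)
    (hq : ∀ x, q x = (1/2) * (∑ i, ∑ j, Q i j * x i * x j) + ∑ i, c i * x i)
    (x d : Fin n → ℝ) (t : ℝ) :
    q (x + t • d) = q x + ((∑ i, ∑ j, Q i j * d i * x j) + ∑ i, c i * d i) * t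
      + ((1/2) * ∑ i, ∑ j, Q i j * d i * d j) * t ^ 2 := by
  rw [hq, hq]
  simp only [Pi.add_apply, Pi.smul_apply, smul_eq_mul]
  have hsym : ∑ i, ∑ j, Q i j * x i * d j = ∑ i, ∑ j, Q i j * d i * x j := by
    rw [Finset.sum_comm]
    exact Finset.sum_congr rfl fun i _ => Finset.sum_congr rfl fun j _ => by
      rw [hQ j i]; ring
  have hquad : ∑ i, ∑ j, Q i j * (x i + t * d i) * (x j + t * d j)
      = (∑ i, ∑ j, Q i j * x i * x j) + t * (∑ i, ∑ j, Q i j * x i * d j)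
        + t * (∑ i, ∑ j, Q i j * d i * x j) + t ^ 2 * (∑ i, ∑ j, Q i j * d i * d j) := by
    simp only [Finset.mul_sum, ← Finset.sum_add_distrib]
    exact Finset.sum_congr rfl fun i _ => Finset.sum_congr rfl fun j _ => by ring
  have hlin : ∑ i, c i * (x i + t * d i) = (∑ i, c i * x i) + t * ∑ i, c i * d i := by
    rw [Finset.mul_sum, ← Finset.sum_add_distrib]
    exact Finset.sum_congr rfl fun j _ => by ring
  rw [hquad, hlin, hsym]; ring

/-- At a strict local minimizer, if the whole line `x + t•d` stays feasible for small `t`,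
then the linear coefficient of `q` along `d` vanishes, and the quadratic term along `d`
is nonzero. -/
lemma strict_B_zero {n : ℕ} (Q : Matrix (Fin n) (Fin n) ℝ) (hQ : ∀ i j, Q i j = Q j i)
    (c : Fin n → ℝ) (q : (Fin n → ℝ) → ℝ)
    (hq : ∀ x, q x = (1/2) * (∑ i, ∑ j, Q i j * x i * x j) + ∑ i, c i * x i)
    (P : Set (Fin n → ℝ)) (x d : Fin n → ℝ) (hd : d ≠ 0)
    (hmem : ∀ᶠ t in 𝓝 (0:ℝ), x + t • d ∈ P)
    (hs : IsStrictLocMin q P x) :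
    ((∑ i, ∑ j, Q i j * d i * x j) + ∑ i, c i * d i = 0) ∧
      (∑ i, ∑ j, Q i j * d i * d j) ≠ 0 := by
  obtain ⟨hxP, ε, hε, hmin⟩ := hs
  have hsmall : ∀ᶠ t in 𝓝 (0:ℝ), n2 (x + t • d - x) < ε := by
    have h1 : Tendsto (fun t : ℝ => |t| * n2 d) (𝓝 0) (𝓝 0) := by
      have : Continuous (fun t : ℝ => |t| * n2 d) := by continuity
      simpa using this.tendsto 0
    filter_upwards [h1.eventually_lt_const hε] with t ht
    rwa [add_sub_cancel_left, n2_smul]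
  have hev : ∀ᶠ t in 𝓝[≠] (0:ℝ),
      0 < ((∑ i, ∑ j, Q i j * d i * x j) + ∑ i, c i * d i) * t
        + ((1/2) * ∑ i, ∑ j, Q i j * d i * d j) * t ^ 2 := by
    filter_upwards [(hmem.and hsmall).filter_mono nhdsWithin_le_nhds,
      self_mem_nhdsWithin] with t ⟨htP, hts⟩ ht0
    have ht0' : t ≠ 0 := ht0
    have hne : x + t • d ≠ x := by
      intro h
      have : t • d = 0 := by
        have := congrArg (fun z => z - x) h
        simpa using this
      exact (smul_ne_zero ht0' hd) this
    have := hmin _ htP hts hne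
    rw [qexpand Q hQ c q hq x d t] at this
    linarith
  have hB0 := key_quad hev
  refine ⟨hB0, fun h0 => ?_⟩
  obtain ⟨t, ht⟩ := hev.exists
  rw [hB0, h0] at ht
  norm_num at ht

/-- For the quadratic program `min ½xᵀQx + cᵀx` over `{x : Ax ≤ b}`,
the set of isolated (equivalently strict, equivalently strong) local minimizers is finite. -/
theorem stmt13 {n m : ℕ} (Q : Matrix (Fin n) (Fin n) ℝ) (hQ : ∀ i j, Q i j = Q j i)
    (c : Fin n → ℝ) (A : Matrix (Fin m) (Fin n) ℝ) (b : Fin m → ℝ)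
    (P : Set (Fin n → ℝ)) (hP : P = {x | ∀ i, (∑ j, A i j * x j) ≤ b i})
    (q : (Fin n → ℝ) → ℝ)
    (hq : ∀ x, q x = (1/2) * (∑ i, ∑ j, Q i j * x i * x j) + ∑ i, c i * x i) :
    {x | IsIsolatedLocMin q P x}.Finite ∧
    {x | IsStrictLocMin q P x}.Finite ∧
    {x | IsStrongLocMin q P x}.Finite := by
  have hstrict : {x | IsStrictLocMin q P x}.Finite := by
    have hinj : Set.InjOn (fun x : Fin n → ℝ => {i | ∑ j, A i j * x j = b i})
        {x | IsStrictLocMin q P x} := by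
      intro x hx y hy hxy
      by_contra hne
      set d : Fin n → ℝ := y - x with hd
      have hdne : d ≠ 0 := sub_ne_zero.2 (Ne.symm hne)
      have hxP : x ∈ P := hx.1
      have hyP : y ∈ P := hy.1
      have hxb : ∀ i, ∑ j, A i j * x j ≤ b i := by rw [hP] at hxP; exact hxP
      have hyb : ∀ i, ∑ j, A i j * y j ≤ b i := by rw [hP] at hyP; exact hyP
      have hact : ∀ i, (∑ j, A i j * x j = b i) ↔ (∑ j, A i j * y j = b i) :=
        fun i => Set.ext_iff.mp hxy i
      have hgd : ∀ i, ∑ j, A i j * d j = (∑ j, A i j * y j) - ∑ j, A i j * x j := by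
        intro i
        rw [← Finset.sum_sub_distrib]
        exact Finset.sum_congr rfl fun j _ => by simp only [hd, Pi.sub_apply]; ring
      have hmemgen : ∀ z : Fin n → ℝ, (∀ i, ∑ j, A i j * z j ≤ b i) →
          (∀ i, (∑ j, A i j * z j = b i) → ∑ j, A i j * d j = 0) →
          ∀ᶠ t in 𝓝 (0:ℝ), z + t • d ∈ P := by
        intro z hzb hzg
        rw [hP]
        simp only [Set.mem_setOf_eq, Pi.add_apply, Pi.smul_apply, smul_eq_mul]
        rw [eventually_all]
        intro i
        by_cases hi : ∑ j, A i j * z j = b i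
        · refine Eventually.of_forall fun t => ?_
          rw [row_expand, hzg i hi, hi]
          simp
        · have hlt : ∑ j, A i j * z j < b i := lt_of_le_of_ne (hzb i) hi
          have hT : Tendsto (fun t : ℝ => (∑ j, A i j * z j) + t * ∑ j, A i j * d j)
              (𝓝 0) (𝓝 (∑ j, A i j * z j)) := by
            have : Continuous fun t : ℝ =>
                (∑ j, A i j * z j) + t * ∑ j, A i j * d j := by continuity
            simpa using this.tendsto 0
          filter_upwards [hT.eventually_lt_const hlt] with t ht
          rw [row_expand]
          exact le_of_lt ht
      have hgx : ∀ i, (∑ j, A i j * x j = b i) → ∑ j, A i j * d j = 0 := by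
        intro i hi
        rw [hgd i, (hact i).mp hi, hi, sub_self]
      have hgy : ∀ i, (∑ j, A i j * y j = b i) → ∑ j, A i j * d j = 0 := by
        intro i hi
        rw [hgd i, hi, (hact i).mpr hi, sub_self]
      have hBx := strict_B_zero Q hQ c q hq P x d hdne (hmemgen x hxb hgx) hx
      have hBy := strict_B_zero Q hQ c q hq P y d hdne (hmemgen y hyb hgy) hy
      have hrel : (∑ i, ∑ j, Q i j * d i * y j) - (∑ i, ∑ j, Q i j * d i * x j)
          = ∑ i, ∑ j, Q i j * d i * d j := by
        rw [← Finset.sum_sub_distrib]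
        refine Finset.sum_congr rfl fun i _ => ?_
        rw [← Finset.sum_sub_distrib]
        exact Finset.sum_congr rfl fun j _ => by simp only [hd, Pi.sub_apply]; ring
      have hdd : ∑ i, ∑ j, Q i j * d i * d j = 0 := by
        rw [← hrel]
        have h1 := hBx.1
        have h2 := hBy.1
        linarith
      exact hBx.2 hdd
    exact Set.Finite.of_finite_image (Set.toFinite _) hinj
  have hsub1 : {x | IsIsolatedLocMin q P x} ⊆ {x | IsStrictLocMin q P x} := by
    rintro x ⟨⟨hxP, ε, hε, hmin⟩, ε₁, hε₁, hiso⟩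
    refine ⟨hxP, min (ε/2) ε₁, lt_min (by linarith) hε₁, fun y hyP hyn hne => ?_⟩
    have hyx : n2 (y - x) < ε :=
      lt_of_lt_of_le hyn (le_trans (min_le_left _ _) (by linarith))
    have hle : q x ≤ q y := hmin y hyP hyx
    by_contra hlt
    have heq : q y = q x := le_antisymm (not_lt.1 hlt) hle
    have hyloc : IsLocMin' q P y := by
      refine ⟨hyP, ε/2, by linarith, fun z hzP hzn => ?_⟩
      have h1 : n2 (z - x) ≤ n2 (z - y) + n2 (y - x) := by
        have := n2_triangle (z - y) (y - x)
        rwa [sub_add_sub_cancel] at this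
      have h2 : n2 (y - x) < ε/2 := lt_of_lt_of_le hyn (min_le_left _ _)
      have h3 : n2 (z - x) < ε := by linarith
      rw [heq]
      exact hmin z hzP h3
    exact hne (hiso y hyloc (lt_of_lt_of_le hyn (min_le_right _ _)))
  have hsub2 : {x | IsStrongLocMin q P x} ⊆ {x | IsStrictLocMin q P x} := by
    rintro x ⟨hxP, c0, hc0, ε, hε, h⟩
    refine ⟨hxP, ε, hε, fun y hy hyn hne => ?_⟩
    have h1 := h y hy hyn
    have hp : 0 < c0 * n2 (y - x) ^ 2 := by
      have h2 := n2_pos (sub_ne_zero.2 hne)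
      positivity
    linarith
  exact ⟨hstrict.subset hsub1, hstrict, hstrict.subset hsub2⟩
end
end
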